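/- Let $(b_t)$ and $(c_t)$ be real sequences with $\lim_{t\to\infty} b_t = b > 0$ and $\lim_{t\to\infty} c_t = c$, and let $(a_t)$ satisfy the recurrence $a_{t+1} = (1 - b_t/t)\,a_t + c_t$ for all $t \ge 1$. Then $\lim_{t\to\infty} a_t/t$ exists and equals $c/(1+b)$. -/

import Mathlib

open Filter Topology

theorem chung_lu_sequence_lemma
    (a b c : ℕ → ℝ) (B C : ℝ)
    (hb : Tendsto b atTop (nhds B)) (hB : B > 0)
    (hc : Tendsto c atTop (nhds C))
    (hrec : ∀ t : ℕ, t ≥ 1 → a (t + 1) = (1 - b t / t) * a t + c t) :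
    Tendsto (fun t : ℕ => a t / t) atTop (nhds (C / (1 + B))) := by
  set L := C / (1 + B) with hL
  have h1B : (1 : ℝ) + B ≠ 0 := by linarith
  set d : ℕ → ℝ := fun t => c t - L * b t - L with hd
  set e : ℕ → ℝ := fun t => a t - L * t with he
  have hdlim : Tendsto d atTop (nhds 0) := by
    have h0 : Tendsto d atTop (nhds (C - L * B - L)) :=
      (hc.sub (hb.const_mul L)).sub tendsto_const_nhds
    have : C - L * B - L = 0 := by
      rw [hL]; field_simp; ring
    rwa [this] at h0
  have herec : ∀ t : ℕ, t ≥ 1 → e (t + 1) = (1 - b t / t) * e t + d t := by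
    intro t ht
    have htne : (t : ℝ) ≠ 0 := Nat.cast_ne_zero.mpr (by omega)
    simp only [he, hd, hrec t ht]
    push_cast
    field_simp
    ring
  have hmain : Tendsto (fun t : ℕ => e t / t) atTop (nhds 0) := by
    rw [Metric.tendsto_atTop]
    intro ε hε
    set δ := min (B / 2) 1 with hδdef
    have hδpos : 0 < δ := lt_min (by linarith) one_pos
    have hδB : δ ≤ B / 2 := min_le_left _ _
    have hδ1 : δ ≤ 1 := min_le_right _ _
    set A := ε / 2 with hA
    have hApos : 0 < A := by positivity
    have hε'pos : 0 < A * δ := by positivity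
    have hbub : ∀ᶠ t in atTop, b t < B + 1 := hb.eventually (eventually_lt_nhds (by linarith))
    have hblb : ∀ᶠ t in atTop, B / 2 < b t := hb.eventually (eventually_gt_nhds (by linarith))
    have hdsm : ∀ᶠ t in atTop, |d t| ≤ A * δ := by
      have h := hdlim.eventually (Metric.ball_mem_nhds 0 hε'pos)
      filter_upwards [h] with t ht
      rw [Real.dist_eq, sub_zero] at ht
      exact le_of_lt ht
    have hlarge : ∀ᶠ t : ℕ in atTop, (B + 1 : ℝ) ≤ t :=
      (tendsto_natCast_atTop_atTop (R := ℝ)).eventually_ge_atTop (B + 1)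
    obtain ⟨T, hT⟩ := ((hbub.and hblb).and (hdsm.and hlarge)).exists_forall_of_atTop
    set T' := max T 1 with hT'
    have hT'1 : 1 ≤ T' := le_max_right _ _
    have hTprop : ∀ t, T' ≤ t → b t < B + 1 ∧ B / 2 < b t ∧ |d t| ≤ A * δ ∧ (B + 1 : ℝ) ≤ t := by
      intro t ht
      have := hT t (le_trans (le_max_left _ _) ht)
      exact ⟨this.1.1, this.1.2, this.2.1, this.2.2⟩
    set K := |e T'| with hK
    have hKnn : 0 ≤ K := abs_nonneg _
    have hind : ∀ t, T' ≤ t → |e t| ≤ A * t + K := by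
      intro t ht
      induction t with
      | zero => omega
      | succ n ih =>
        rcases Nat.lt_or_ge n T' with h | h
        · -- base: T' = n + 1
          have hTeq : T' = n + 1 := by omega
          have hKeq : K = |e (n + 1)| := by rw [hK, hTeq]
          have hpos : (0 : ℝ) ≤ A * ((n : ℝ) + 1) := by positivity
          push_cast
          linarith [hKeq.ge]
        · -- step: T' ≤ n
          have hn1 : 1 ≤ n := le_trans hT'1 h
          have hnpos : (0 : ℝ) < n := by exact_mod_cast hn1
          obtain ⟨hbu, hbl, hds, hlg⟩ := hTprop n h
          have ihn := ih h
          have hbn : δ ≤ b n := le_trans hδB (le_of_lt hbl)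
          have hmult0 : 0 ≤ 1 - b n / n := by
            have : b n / n ≤ 1 := by
              rw [div_le_one hnpos]; linarith
            linarith
          have hmult1 : 1 - b n / n ≤ 1 - δ / n := by
            have : δ / n ≤ b n / n := by gcongr
            linarith
          have hmult2 : 0 ≤ 1 - δ / n := le_trans hmult0 hmult1
          have hstep : |e (n + 1)| ≤ (1 - b n / n) * |e n| + |d n| := by
            rw [herec n hn1]
            calc |(1 - b n / ↑n) * e n + d n| ≤ |(1 - b n / ↑n) * e n| + |d n| :=
                  abs_add_le _ _
              _ = (1 - b n / ↑n) * |e n| + |d n| := by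
                  rw [abs_mul, abs_of_nonneg hmult0]
          have h2 : (1 - b n / n) * |e n| ≤ (1 - δ / n) * (A * n + K) :=
            mul_le_mul hmult1 ihn (abs_nonneg _) hmult2
          have h3 : (1 - δ / n) * (A * n + K) + A * δ ≤ A * (n + 1) + K := by
            have hKδ : 0 ≤ K * (δ / n) := by positivity
            have hδn : δ / n * n = δ := div_mul_cancel₀ δ (ne_of_gt hnpos)
            nlinarith [hApos.le]
          push_cast
          calc |e (n + 1)| ≤ (1 - b n / n) * |e n| + |d n| := hstep
            _ ≤ (1 - δ / n) * (A * n + K) + A * δ := add_le_add h2 hds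
            _ ≤ A * (n + 1) + K := h3
    obtain ⟨M, hM⟩ := exists_nat_gt (2 * K / ε)
    refine ⟨max T' M, fun t ht => ?_⟩
    have htT : T' ≤ t := le_trans (le_max_left _ _) ht
    have htM : (M : ℝ) ≤ t := by exact_mod_cast le_trans (le_max_right _ _) ht
    have ht1 : 1 ≤ t := le_trans hT'1 htT
    have htpos : (0 : ℝ) < t := by exact_mod_cast ht1
    have hKt : K < ε / 2 * t := by
      have h2K : 2 * K / ε < t := lt_of_lt_of_le hM htM
      rw [div_lt_iff₀ hε] at h2K
      nlinarith
    have hind' := hind t htT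
    rw [Real.dist_eq, sub_zero]
    have h1 : |e t / t| = |e t| / t := by rw [abs_div, abs_of_pos htpos]
    rw [h1, div_lt_iff₀ htpos]
    have hAt : A * t = ε / 2 * t := by rw [hA]
    nlinarith
  have hsum : Tendsto (fun t : ℕ => e t / t + L) atTop (nhds (0 + L)) :=
    hmain.add tendsto_const_nhds
  rw [zero_add] at hsum
  refine hsum.congr' ?_
  filter_upwards [eventually_ge_atTop 1] with t ht
  have htne : (t : ℝ) ≠ 0 := Nat.cast_ne_zero.mpr (by omega)
  simp only [he]
  field_simp
  ring
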